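/- Let E be a finite subset of V. Define R_0 = E ∪ −S(L) and R_{i+1} = { v ∈ V : π(Ψ(v)) ∩ R_i ≠ ∅ }. Then (R_i)_{i≥0} is a nondecreasing, eventually constant sequence of finite sets, and R = ∪_{i≥0} R_i is a finite set satisfying E ⊂ R and the property ⋆_V (i.e., −S(L) ⊂ R ⊂ V and ∪_{v ∈ V\R} π(Ψ(v)) = V \ R). Moreover max R = max (E ∪ −S(L)). -/

import Mathlib

open Polynomial Finset

noncomputable def PL {K : Type*} [Field K] (ℓ n : ℕ) (a : ℕ → Polynomial K) : Finset (ℚ × ℚ) :=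
  (Finset.range (n + 1)).biUnion fun i =>
    (a i).support.image fun j : ℕ => ((ℓ : ℚ) ^ i, (j : ℚ))

noncomputable def PsiSet {K : Type*} [Field K] (ℓ n : ℕ) (a : ℕ → Polynomial K) (v : ℚ) :
    Finset ℚ :=
  (PL ℓ n a).image fun p => v * p.1 + p.2

noncomputable def psi {K : Type*} [Field K] (ℓ n : ℕ) (a : ℕ → Polynomial K) (v : ℚ) : ℚ :=
  WithTop.untopD 0 ((PsiSet ℓ n a v).min)

noncomputable def piF {K : Type*} [Field K] (ℓ n : ℕ) (a : ℕ → Polynomial K) (q : ℚ) : ℚ :=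
  WithBot.unbotD 0 (((PL ℓ n a).image fun p => (q - p.2) / p.1).max)

def slopeSet {K : Type*} [Field K] (ℓ n : ℕ) (a : ℕ → Polynomial K) : Set ℚ :=
  {μ | ∃ b : ℚ,
    (∃ p ∈ PL ℓ n a, ∃ q ∈ PL ℓ n a, p ≠ q ∧ p.2 - μ * p.1 = b ∧ q.2 - μ * q.1 = b) ∧
    ∀ p ∈ PL ℓ n a, b ≤ p.2 - μ * p.1}

noncomputable def scaleEmb (ℓ : ℕ) (hℓ : 2 ≤ ℓ) (i : ℕ) : ℚ ↪o ℚ :=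
  (OrderIso.mulLeft₀ ((ℓ : ℚ) ^ i)
    (pow_pos (by exact_mod_cast Nat.lt_of_lt_of_le Nat.zero_lt_two hℓ) i)).toOrderEmbedding

noncomputable def mahlerOp {K : Type*} [Field K] (ℓ : ℕ) (hℓ : 2 ≤ ℓ) (n : ℕ)
    (a : ℕ → Polynomial K) (f : HahnSeries ℚ K) : HahnSeries ℚ K :=
  ∑ i ∈ Finset.range (n + 1),
    (HahnSeries.ofPowerSeries ℚ K (a i : PowerSeries K)) *
      HahnSeries.embDomain (scaleEmb ℓ hℓ i) f

/-!
Write `C v = π(Ψ(v))`, so that `R (i + 1)` is the set of `v ∈ V` with a child `C v` meeting `R i`.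
Three facts about `C` drive everything: `v ∈ C v` (π of the least element of `Ψ(v)` is `v`), every
element of `C v` is `≥ v`, and each `w` lies in `C v` for only finitely many `v`. Hence the `R i`
increase, stay finite, and are bounded by any upper bound of `R 0`. An element that is new at
step `i + 2` lies strictly below one that is new at step `i + 1`, so if the sequence never
stabilised, the maxima of the new elements would descend forever in the well-ordered set `V`. The limit `R` contains
the parents of its elements, which is the property `⋆_V`.
-/

section ParentsIn

variable {α : Type*} {V s : Set α} {C : α → Set α}

def parentsIn (V : Set α) (C : α → Set α) (s : Set α) : Set α :=
  {v ∈ V | (C v ∩ s).Nonempty}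

lemma parentsIn_subset : parentsIn V C s ⊆ V := fun _ hv => hv.1

lemma subset_parentsIn (hself : ∀ v, v ∈ C v) (hs : s ⊆ V) : s ⊆ parentsIn V C s :=
  fun v hv => ⟨hs hv, v, hself v, hv⟩

lemma parentsIn_finite (hpar : ∀ w, {v | w ∈ C v}.Finite) (hs : s.Finite) :
    (parentsIn V C s).Finite :=
  (hs.biUnion fun w _ => hpar w).subset fun _ ⟨_, _, hwC, hws⟩ => Set.mem_biUnion hws hwC

lemma upperBounds_subset_upperBounds_parentsIn [Preorder α] (hge : ∀ v, ∀ w ∈ C v, v ≤ w) :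
    upperBounds s ⊆ upperBounds (parentsIn V C s) :=
  fun _ hm _ ⟨_, _, hwC, hws⟩ => (hge _ _ hwC).trans (hm hws)

lemma biUnion_diff_eq_diff_of_parentsIn_subset {S : Set α} (hself : ∀ v, v ∈ C v)
    (hCV : ∀ v ∈ V, C v ⊆ V) (hS : parentsIn V C S ⊆ S) :
    ⋃ v ∈ V \ S, C v = V \ S := by
  refine Set.Subset.antisymm (Set.iUnion₂_subset fun v hv w hw => ⟨hCV v hv.1 hw, ?_⟩)
    fun v hv => Set.mem_biUnion hv (hself v)
  exact fun hwS => hv.2 (hS ⟨hv.1, w, hw, hwS⟩)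

end ParentsIn

section ParentsInSeq

variable {α : Type*} {V : Set α} {C : α → Set α} {R : ℕ → Set α}

lemma parentsIn_seq_subset (hR : ∀ i, R (i + 1) = parentsIn V C (R i)) (hR0 : R 0 ⊆ V) :
    ∀ i, R i ⊆ V
  | 0 => hR0
  | i + 1 => hR i ▸ parentsIn_subset

lemma parentsIn_seq_monotone (hR : ∀ i, R (i + 1) = parentsIn V C (R i)) (hself : ∀ v, v ∈ C v)
    (hR0 : R 0 ⊆ V) : Monotone R :=
  monotone_nat_of_le_succ fun i =>
    (hR i).symm ▸ subset_parentsIn hself (parentsIn_seq_subset hR hR0 i)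

lemma parentsIn_seq_finite (hR : ∀ i, R (i + 1) = parentsIn V C (R i))
    (hpar : ∀ w, {v | w ∈ C v}.Finite) (hR0 : (R 0).Finite) :
    ∀ i, (R i).Finite
  | 0 => hR0
  | i + 1 => hR i ▸ parentsIn_finite hpar (parentsIn_seq_finite hR hpar hR0 i)

lemma parentsIn_seq_eq_of_le (hR : ∀ i, R (i + 1) = parentsIn V C (R i)) {N : ℕ}
    (hN : R (N + 1) = R N) {i : ℕ} (hi : N ≤ i) : R i = R N := by
  induction i, hi using Nat.le_induction with
  | base => rfl
  | succ i _ ih => rw [hR, ih, ← hR, hN]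

lemma iUnion_parentsIn_seq_eq (hR : ∀ i, R (i + 1) = parentsIn V C (R i)) (hmono : Monotone R)
    {N : ℕ} (hN : R (N + 1) = R N) : ⋃ i, R i = R N :=
  (Set.iUnion_subset fun i => (hmono (le_max_left i N)).trans
    (parentsIn_seq_eq_of_le hR hN (le_max_right i N)).le).antisymm (Set.subset_iUnion R N)

lemma parentsIn_iUnion_parentsIn_seq_subset (hR : ∀ i, R (i + 1) = parentsIn V C (R i)) :
    parentsIn V C (⋃ i, R i) ⊆ ⋃ i, R i := by
  rintro v ⟨hvV, w, hwC, hw⟩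
  obtain ⟨i, hwi⟩ := Set.mem_iUnion.mp hw
  exact Set.mem_iUnion.mpr ⟨i + 1, hR i ▸ ⟨hvV, w, hwC, hwi⟩⟩

lemma upperBounds_parentsIn_seq [Preorder α] (hR : ∀ i, R (i + 1) = parentsIn V C (R i))
    (hge : ∀ v, ∀ w ∈ C v, v ≤ w) :
    ∀ i, upperBounds (R 0) ⊆ upperBounds (R i)
  | 0 => le_rfl
  | i + 1 => hR i ▸ (upperBounds_parentsIn_seq hR hge i).trans
      (upperBounds_subset_upperBounds_parentsIn hge)

lemma exists_lt_of_mem_parentsIn_seq_diff [PartialOrder α]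
    (hR : ∀ i, R (i + 1) = parentsIn V C (R i)) (hge : ∀ v, ∀ w ∈ C v, v ≤ w)
    {i : ℕ} {v : α} (hv : v ∈ R (i + 2) \ R (i + 1)) : ∃ w ∈ R (i + 1) \ R i, v < w := by
  obtain ⟨⟨hvV, w, hwC, hw⟩, hvnew⟩ := hv.imp (hR (i + 1) ▸ ·) id
  refine ⟨w, ⟨hw, fun hwi => hvnew (hR i ▸ ⟨hvV, w, hwC, hwi⟩)⟩, (hge v w hwC).lt_of_ne ?_⟩
  rintro rfl
  exact hvnew hw

lemma exists_parentsIn_seq_succ_eq [LinearOrder α]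
    (hR : ∀ i, R (i + 1) = parentsIn V C (R i)) (hself : ∀ v, v ∈ C v)
    (hge : ∀ v, ∀ w ∈ C v, v ≤ w) (hpar : ∀ w, {v | w ∈ C v}.Finite) (hV : V.IsWF)
    (hR0V : R 0 ⊆ V) (hR0 : (R 0).Finite) : ∃ N, R (N + 1) = R N := by
  by_contra! hne
  have hnew : ∀ i, (R (i + 1) \ R i).Nonempty := fun i => Set.sdiff_nonempty.mpr fun h =>
    hne i (h.antisymm (parentsIn_seq_monotone hR hself hR0V i.le_succ))
  choose m hm hmax using fun i => Set.exists_max_image _ id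
    ((parentsIn_seq_finite hR hpar hR0 (i + 1)).sdiff) (hnew i)
  refine Set.isWF_iff_no_descending_seq.mp hV m (strictAnti_nat_of_succ_lt fun i => ?_)
    fun i => parentsIn_seq_subset hR hR0V (i + 1) (hm i).1
  obtain ⟨w, hw, hlt⟩ := exists_lt_of_mem_parentsIn_seq_diff hR hge (hm (i + 1))
  exact hlt.trans_le (hmax i w hw)

end ParentsInSeq

section NewtonPolygon

variable {K : Type*} [Field K] {ℓ n : ℕ} {a : ℕ → Polynomial K}

lemma PL_nonempty (h0 : a 0 ≠ 0) : (PL ℓ n a).Nonempty := by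
  obtain ⟨j, hj⟩ := Polynomial.nonempty_support_iff.mpr h0
  exact ⟨((ℓ : ℚ) ^ 0, (j : ℚ)), Finset.mem_biUnion.mpr
    ⟨0, Finset.mem_range.mpr n.succ_pos, Finset.mem_image.mpr ⟨j, hj, rfl⟩⟩⟩

lemma PL_fst_pos (hℓ : 0 < ℓ) {p : ℚ × ℚ} (hp : p ∈ PL ℓ n a) : 0 < p.1 := by
  obtain ⟨i, -, hi⟩ := Finset.mem_biUnion.mp hp
  obtain ⟨j, -, rfl⟩ := Finset.mem_image.mp hi
  exact pow_pos (Nat.cast_pos.mpr hℓ) i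

lemma piF_isGreatest (h0 : a 0 ≠ 0) (q : ℚ) :
    IsGreatest ↑((PL ℓ n a).image fun p => (q - p.2) / p.1) (piF ℓ n a q) := by
  have hne := (PL_nonempty (ℓ := ℓ) (n := n) h0).image fun p : ℚ × ℚ => (q - p.2) / p.1
  rw [piF, ← Finset.coe_max' hne]
  exact Finset.isGreatest_max' _ hne

lemma div_fst_of_mem_PL (hℓ : 0 < ℓ) (v : ℚ) {p : ℚ × ℚ} (hp : p ∈ PL ℓ n a) :
    (v * p.1 + p.2 - p.2) / p.1 = v := by
  rw [add_sub_cancel_right, mul_div_cancel_right₀ _ (PL_fst_pos hℓ hp).ne']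

/-- `π` sends the least element of `Ψ(v)` back to `v`. -/
lemma self_mem_image_piF_PsiSet (hℓ : 0 < ℓ) (h0 : a 0 ≠ 0) (v : ℚ) :
    v ∈ (PsiSet ℓ n a v).image (piF ℓ n a) := by
  obtain ⟨p₀, hp₀, hmin⟩ :=
    Finset.exists_min_image (PL ℓ n a) (fun p => v * p.1 + p.2) (PL_nonempty h0)
  refine Finset.mem_image.mpr ⟨v * p₀.1 + p₀.2, Finset.mem_image_of_mem _ hp₀, ?_⟩
  obtain ⟨hmem, hub⟩ := piF_isGreatest (ℓ := ℓ) (n := n) h0 (v * p₀.1 + p₀.2)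
  obtain ⟨p, hp, hpmax⟩ := Finset.mem_image.mp hmem
  refine le_antisymm ?_ ?_
  · rw [← hpmax, div_le_iff₀ (PL_fst_pos hℓ hp)]
    linarith [hmin p hp]
  · have := hub (Finset.mem_coe.mpr (Finset.mem_image_of_mem
      (fun p : ℚ × ℚ => (v * p₀.1 + p₀.2 - p.2) / p.1) hp₀))
    rwa [div_fst_of_mem_PL hℓ v hp₀] at this

lemma le_of_mem_image_piF_PsiSet (hℓ : 0 < ℓ) (h0 : a 0 ≠ 0) {v w : ℚ}
    (hw : w ∈ (PsiSet ℓ n a v).image (piF ℓ n a)) : v ≤ w := by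
  obtain ⟨_, hq, rfl⟩ := Finset.mem_image.mp hw
  obtain ⟨p, hp, rfl⟩ := Finset.mem_image.mp hq
  have := (piF_isGreatest h0 _).2 (Finset.mem_coe.mpr (Finset.mem_image_of_mem
    (fun p' : ℚ × ℚ => (v * p.1 + p.2 - p'.2) / p'.1) hp))
  rwa [div_fst_of_mem_PL hℓ v hp] at this

/-- Each `w` arises as `π(v ℓ^i + j) = (v ℓ^i + j - j') / ℓ^i'` for finitely many `v`. -/
lemma finite_setOf_mem_image_piF_PsiSet (hℓ : 0 < ℓ) (h0 : a 0 ≠ 0) (w : ℚ) :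
    {v | w ∈ (PsiSet ℓ n a v).image (piF ℓ n a)}.Finite := by
  refine (((PL ℓ n a ×ˢ PL ℓ n a).image
    fun r : (ℚ × ℚ) × ℚ × ℚ => (w * r.2.1 + r.2.2 - r.1.2) / r.1.1).finite_toSet).subset ?_
  intro v hv
  obtain ⟨_, hq, rfl⟩ := Finset.mem_image.mp hv
  obtain ⟨p, hp, rfl⟩ := Finset.mem_image.mp hq
  obtain ⟨p', hp', hp'max⟩ := Finset.mem_image.mp (piF_isGreatest h0 (v * p.1 + p.2)).1
  refine Finset.mem_image.mpr ⟨(p, p'), Finset.mem_product.mpr ⟨hp, hp'⟩, ?_⟩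
  rw [← hp'max, div_mul_cancel₀ _ (PL_fst_pos hℓ hp').ne']
  simpa only [sub_add_cancel] using div_fst_of_mem_PL hℓ v hp

lemma slopeSet_finite : (slopeSet ℓ n a).Finite := by
  refine (((PL ℓ n a ×ˢ PL ℓ n a).image
    fun r : (ℚ × ℚ) × ℚ × ℚ => (r.1.2 - r.2.2) / (r.1.1 - r.2.1)).finite_toSet).subset ?_
  rintro μ ⟨b, ⟨p, hp, q, hq, hne, hpb, hqb⟩, -⟩
  have hfst : p.1 ≠ q.1 := fun h => hne (Prod.ext h (by rw [h] at hpb; linarith))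
  refine Finset.mem_image.mpr ⟨(p, q), Finset.mem_product.mpr ⟨hp, hq⟩, ?_⟩
  rw [div_eq_iff (sub_ne_zero.mpr hfst)]
  linarith

end NewtonPolygon

theorem stmt19_general {K : Type*} [Field K] (ℓ n : ℕ) (hℓ : 2 ≤ ℓ) (a : ℕ → Polynomial K)
    (h0 : a 0 ≠ 0) (V : Set ℚ)
    (hwf : V.IsWF)
    (hslV : Neg.neg '' slopeSet ℓ n a ⊆ V)
    (hstab : (⋃ v ∈ V, ((PsiSet ℓ n a v).image (piF ℓ n a) : Set ℚ)) = V)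
    (E : Set ℚ) (hEfin : E.Finite) (hEV : E ⊆ V)
    (R : ℕ → Set ℚ)
    (hR0 : R 0 = E ∪ Neg.neg '' slopeSet ℓ n a)
    (hRs : ∀ i, R (i + 1) =
      {v ∈ V | (((PsiSet ℓ n a v).image (piF ℓ n a) : Set ℚ) ∩ R i).Nonempty}) :
    Monotone R ∧ (∀ i, (R i).Finite) ∧ (∃ N, ∀ i, N ≤ i → R i = R N) ∧
    (⋃ i, R i).Finite ∧ E ⊆ (⋃ i, R i) ∧
    Neg.neg '' slopeSet ℓ n a ⊆ (⋃ i, R i) ∧ (⋃ i, R i) ⊆ V ∧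
    (⋃ v ∈ V \ (⋃ i, R i), ((PsiSet ℓ n a v).image (piF ℓ n a) : Set ℚ)) = V \ (⋃ i, R i) ∧
    ∀ m : ℚ, IsGreatest (E ∪ Neg.neg '' slopeSet ℓ n a) m → IsGreatest (⋃ i, R i) m := by
  set C : ℚ → Set ℚ := fun v => ((PsiSet ℓ n a v).image (piF ℓ n a) : Set ℚ)
  have hR : ∀ i, R (i + 1) = parentsIn V C (R i) := hRs
  have hℓ0 : 0 < ℓ := by omega
  have hself : ∀ v, v ∈ C v := self_mem_image_piF_PsiSet hℓ0 h0
  have hge : ∀ v, ∀ w ∈ C v, v ≤ w := fun _ _ => le_of_mem_image_piF_PsiSet hℓ0 h0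
  have hpar : ∀ w, {v | w ∈ C v}.Finite := finite_setOf_mem_image_piF_PsiSet hℓ0 h0
  have hCV : ∀ v ∈ V, C v ⊆ V := fun v hv => hstab ▸ Set.subset_biUnion_of_mem hv
  have hR0V : R 0 ⊆ V := hR0 ▸ Set.union_subset hEV hslV
  have hR0fin : (R 0).Finite := hR0 ▸ hEfin.union (slopeSet_finite.image _)
  have hmono := parentsIn_seq_monotone hR hself hR0V
  have hfin := parentsIn_seq_finite hR hpar hR0fin
  obtain ⟨N, hN⟩ := exists_parentsIn_seq_succ_eq hR hself hge hpar hwf hR0V hR0fin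
  have hR0sub : E ∪ Neg.neg '' slopeSet ℓ n a ⊆ ⋃ i, R i := hR0 ▸ Set.subset_iUnion R 0
  refine ⟨hmono, hfin, ⟨N, fun _ => parentsIn_seq_eq_of_le hR hN⟩,
    iUnion_parentsIn_seq_eq hR hmono hN ▸ hfin N, Set.subset_union_left.trans hR0sub,
    Set.subset_union_right.trans hR0sub, Set.iUnion_subset (parentsIn_seq_subset hR hR0V),
    biUnion_diff_eq_diff_of_parentsIn_subset hself hCV (parentsIn_iUnion_parentsIn_seq_subset hR),
    fun m hm => ⟨hR0sub hm.1, ?_⟩⟩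
  rw [← hR0] at hm
  rw [upperBounds_iUnion]
  exact Set.mem_iInter.mpr fun i => upperBounds_parentsIn_seq hR hge i hm.2

theorem stmt19 {K : Type*} [Field K] (ℓ n : ℕ) (hℓ : 2 ≤ ℓ) (a : ℕ → Polynomial K)
    (h0 : a 0 ≠ 0) (hn : a n ≠ 0) (V : Set ℚ)
    (hsolV : ∀ f : HahnSeries ℚ K, mahlerOp ℓ hℓ n a f = 0 → f.support ⊆ V)
    (hwf : V.IsWF)
    (hslV : Neg.neg '' slopeSet ℓ n a ⊆ V)
    (hstab : (⋃ v ∈ V, ((PsiSet ℓ n a v).image (piF ℓ n a) : Set ℚ)) = V)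
    (E : Set ℚ) (hEfin : E.Finite) (hEV : E ⊆ V)
    (R : ℕ → Set ℚ)
    (hR0 : R 0 = E ∪ Neg.neg '' slopeSet ℓ n a)
    (hRs : ∀ i, R (i + 1) =
      {v ∈ V | (((PsiSet ℓ n a v).image (piF ℓ n a) : Set ℚ) ∩ R i).Nonempty}) :
    Monotone R ∧ (∀ i, (R i).Finite) ∧ (∃ N, ∀ i, N ≤ i → R i = R N) ∧
    (⋃ i, R i).Finite ∧ E ⊆ (⋃ i, R i) ∧
    Neg.neg '' slopeSet ℓ n a ⊆ (⋃ i, R i) ∧ (⋃ i, R i) ⊆ V ∧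
    (⋃ v ∈ V \ (⋃ i, R i), ((PsiSet ℓ n a v).image (piF ℓ n a) : Set ℚ)) = V \ (⋃ i, R i) ∧
    ∀ m : ℚ, IsGreatest (E ∪ Neg.neg '' slopeSet ℓ n a) m → IsGreatest (⋃ i, R i) m :=
  stmt19_general ℓ n hℓ a h0 V hwf hslV hstab E hEfin hEV R hR0 hRs
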